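/- For all a, b ∈ ℝ and c, d ∈ ℝ with c ≠ 0, c² ≠ d²: ∫_0^a ∫_0^b e^{c(τ+τ') - d|τ-τ'|} dτ dτ' = (1/(c²-d²)) · (1_{ab≥0} · (d·sign(a)/c)(1 - e^{2c·sign(a)(|a|∧|b|)}) + 1 - e^{ca - d|a|} - e^{cb - d|b|} + e^{c(a+b) - d|a-b|}). -/

import Mathlib

/-!
Off the diagonal the integrand factors: for `τ ≤ τ'` it is `exp ((c + d) τ) * exp ((c - d) τ')`,
for `τ' ≤ τ` it is `exp ((c - d) τ) * exp ((c + d) τ')`, so every integral is elementary once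
`[0, b]` is split at `τ'`. The reflection `(a, b, c) ↦ (-a, -b, -c)` and the symmetry `a ↔ b`
(Fubini) reduce the claim to `0 ≤ a ≤ b` and to `b ≤ 0 ≤ a`; in the second case the rectangle
misses the diagonal and the double integral is a product of two one-dimensional ones.
-/

open Real intervalIntegral
open MeasureTheory (volume IntegrableOn intervalIntegral_intervalIntegral_swap)

noncomputable def expKernelIntegral (c d a b : ℝ) : ℝ :=
  ∫ τ' in (0 : ℝ)..a, ∫ τ in (0 : ℝ)..b, exp (c * (τ + τ') - d * |τ - τ'|)

noncomputable def expKernelIntegralFormula (c d a b : ℝ) : ℝ :=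
  (1 / (c ^ 2 - d ^ 2)) *
    ((if 0 ≤ a * b then
        (d * Real.sign a / c) * (1 - exp (2 * c * Real.sign a * min |a| |b|))
      else 0)
      + 1 - exp (c * a - d * |a|) - exp (c * b - d * |b|)
      + exp (c * (a + b) - d * |a - b|))

lemma integral_exp_mul {k : ℝ} (hk : k ≠ 0) (x y : ℝ) :
    ∫ t in x..y, exp (k * t) = (exp (k * y) - exp (k * x)) / k := by
  rw [integral_comp_mul_left (fun t => exp t) hk, integral_exp, smul_eq_mul, inv_mul_eq_div]

lemma integral_comp_neg_zero (f : ℝ → ℝ) (s : ℝ) :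
    ∫ x in (0 : ℝ)..-s, f (-x) = -∫ x in (0 : ℝ)..s, f x := by
  rw [integral_comp_neg, neg_neg, neg_zero, integral_symm]

section Kernel

variable {c d τ' : ℝ}

lemma integral_exp_kernel_of_le {x y : ℝ} (h : ∀ τ ∈ Set.uIcc x y, τ ≤ τ') (hcd : c + d ≠ 0) :
    ∫ τ in x..y, exp (c * (τ + τ') - d * |τ - τ'|)
      = (exp ((c + d) * y) - exp ((c + d) * x)) / (c + d) * exp ((c - d) * τ') := by
  rw [← integral_exp_mul hcd, ← integral_mul_const]
  refine integral_congr fun τ hτ => ?_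
  rw [abs_of_nonpos (sub_nonpos.2 (h τ hτ)), ← exp_add]
  ring_nf

lemma integral_exp_kernel_of_ge {x y : ℝ} (h : ∀ τ ∈ Set.uIcc x y, τ' ≤ τ) (hcd : c - d ≠ 0) :
    ∫ τ in x..y, exp (c * (τ + τ') - d * |τ - τ'|)
      = (exp ((c - d) * y) - exp ((c - d) * x)) / (c - d) * exp ((c + d) * τ') := by
  rw [← integral_exp_mul hcd, ← integral_mul_const]
  refine integral_congr fun τ hτ => ?_
  rw [abs_of_nonneg (sub_nonneg.2 (h τ hτ)), ← exp_add]
  ring_nf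

lemma integral_exp_kernel_of_mem_Icc {b : ℝ} (h0 : 0 ≤ τ') (hb : τ' ≤ b)
    (h1 : c + d ≠ 0) (h2 : c - d ≠ 0) :
    ∫ τ in (0 : ℝ)..b, exp (c * (τ + τ') - d * |τ - τ'|)
      = (1 / (c + d) - 1 / (c - d)) * exp (2 * c * τ') - 1 / (c + d) * exp ((c - d) * τ')
        + exp ((c - d) * b) / (c - d) * exp ((c + d) * τ') := by
  have hint : ∀ x y, IntervalIntegrable (fun τ => exp (c * (τ + τ') - d * |τ - τ'|)) volume x y :=
    fun x y => (by fun_prop : Continuous _).intervalIntegrable x y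
  have h2c : exp ((c + d) * τ') * exp ((c - d) * τ') = exp (2 * c * τ') := by
    rw [← exp_add]; ring_nf
  rw [← integral_add_adjacent_intervals (hint 0 τ') (hint τ' b),
    integral_exp_kernel_of_le (fun τ hτ => by rw [Set.uIcc_of_le h0] at hτ; exact hτ.2) h1,
    integral_exp_kernel_of_ge (fun τ hτ => by rw [Set.uIcc_of_le hb] at hτ; exact hτ.1) h2,
    mul_zero, exp_zero, ← h2c]
  ring

end Kernel

section DoubleIntegral

variable {c d a b : ℝ}

lemma expKernelIntegral_comm : expKernelIntegral c d a b = expKernelIntegral c d b a := by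
  have hint : IntegrableOn (Function.uncurry fun τ' τ => exp (c * (τ + τ') - d * |τ - τ'|))
      (Set.uIoc 0 a ×ˢ Set.uIoc 0 b) :=
    ((Continuous.continuousOn (by fun_prop)).integrableOn_compact
      (isCompact_uIcc.prod isCompact_uIcc)).mono_set
      (Set.prod_mono Set.uIoc_subset_uIcc Set.uIoc_subset_uIcc)
  rw [expKernelIntegral, expKernelIntegral, intervalIntegral_intervalIntegral_swap hint]
  simp only [add_comm, abs_sub_comm]

lemma expKernelIntegral_neg :
    expKernelIntegral c d a b = expKernelIntegral (-c) d (-a) (-b) := by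
  have inner : ∀ τ', ∫ τ in (0 : ℝ)..-b, exp (-c * (τ + τ') - d * |τ - τ'|)
      = -∫ τ in (0 : ℝ)..b, exp (c * (τ + -τ') - d * |τ - -τ'|) := fun τ' => by
    rw [← integral_comp_neg_zero]
    refine integral_congr fun τ _ => ?_
    rw [show -τ - -τ' = -(τ - τ') by ring, abs_neg]
    ring_nf
  simp only [expKernelIntegral, inner]
  rw [integral_comp_neg_zero (fun σ => -∫ τ in (0 : ℝ)..b, exp (c * (τ + σ) - d * |τ - σ|)),
    integral_neg, neg_neg]

lemma expKernelIntegral_of_nonneg_of_nonpos (ha : 0 ≤ a) (hb : b ≤ 0)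
    (h1 : c + d ≠ 0) (h2 : c - d ≠ 0) :
    expKernelIntegral c d a b
      = (exp ((c + d) * b) - 1) / (c + d) * ((exp ((c - d) * a) - 1) / (c - d)) := by
  have inner : ∀ τ' ∈ Set.uIcc 0 a, ∫ τ in (0 : ℝ)..b, exp (c * (τ + τ') - d * |τ - τ'|)
      = (exp ((c + d) * b) - 1) / (c + d) * exp ((c - d) * τ') := fun τ' hτ' => by
    rw [Set.uIcc_of_le ha] at hτ'
    rw [integral_exp_kernel_of_le (fun τ hτ => ?_) h1, mul_zero, exp_zero]
    rw [Set.uIcc_of_ge hb] at hτ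
    linarith [hτ.2, hτ'.1]
  rw [expKernelIntegral, integral_congr inner, integral_const_mul, integral_exp_mul h2, mul_zero,
    exp_zero]

lemma expKernelIntegral_of_le (ha : 0 ≤ a) (hab : a ≤ b) (hc : c ≠ 0)
    (h1 : c + d ≠ 0) (h2 : c - d ≠ 0) :
    expKernelIntegral c d a b
      = 1 / (c ^ 2 - d ^ 2) * (d / c * (1 - exp (2 * c * a)) + 1 - exp (c * a - d * a)
          - exp (c * b - d * b) + exp (c * (a + b) - d * (b - a))) := by
  have inner : ∀ τ' ∈ Set.uIcc 0 a, ∫ τ in (0 : ℝ)..b, exp (c * (τ + τ') - d * |τ - τ'|)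
      = (1 / (c + d) - 1 / (c - d)) * exp (2 * c * τ') - 1 / (c + d) * exp ((c - d) * τ')
        + exp ((c - d) * b) / (c - d) * exp ((c + d) * τ') := fun τ' hτ' => by
    rw [Set.uIcc_of_le ha] at hτ'
    exact integral_exp_kernel_of_mem_Icc hτ'.1 (hτ'.2.trans hab) h1 h2
  have hint : ∀ r k, IntervalIntegrable (fun t => r * exp (k * t)) volume 0 a :=
    fun r k => (by fun_prop : Continuous _).intervalIntegrable 0 a
  rw [expKernelIntegral, integral_congr inner, integral_add ((hint _ _).sub (hint _ _)) (hint _ _),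
    integral_sub (hint _ _) (hint _ _), integral_const_mul, integral_const_mul, integral_const_mul,
    integral_exp_mul (mul_ne_zero two_ne_zero hc), integral_exp_mul h1, integral_exp_mul h2,
    show c * (a + b) - d * (b - a) = (c + d) * a + (c - d) * b by ring, exp_add,
    show c * a - d * a = (c - d) * a by ring, show c * b - d * b = (c - d) * b by ring,
    show c ^ 2 - d ^ 2 = (c + d) * (c - d) by ring]
  simp only [mul_zero, exp_zero]
  field_simp
  ring

lemma expKernelIntegral_of_nonneg (ha : 0 ≤ a) (hb : 0 ≤ b) (hc : c ≠ 0)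
    (h1 : c + d ≠ 0) (h2 : c - d ≠ 0) :
    expKernelIntegral c d a b
      = 1 / (c ^ 2 - d ^ 2) * (d / c * (1 - exp (2 * c * min a b)) + 1 - exp (c * a - d * a)
          - exp (c * b - d * b) + exp (c * (a + b) - d * |a - b|)) := by
  wlog hab : a ≤ b generalizing a b
  · rw [expKernelIntegral_comm, this hb ha (le_of_not_ge hab), min_comm, abs_sub_comm, add_comm b a]
    ring
  rw [expKernelIntegral_of_le ha hab hc h1 h2, min_eq_left hab, abs_of_nonpos (sub_nonpos.2 hab),
    neg_sub]

end DoubleIntegral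

section Formula

variable {c d a b : ℝ}

lemma expKernelIntegralFormula_neg :
    expKernelIntegralFormula c d a b = expKernelIntegralFormula (-c) d (-a) (-b) := by
  simp only [expKernelIntegralFormula, neg_sq, neg_mul_neg, Real.sign_neg, abs_neg, neg_sub_neg]
  rw [abs_sub_comm b a]
  ring_nf

lemma expKernelIntegralFormula_of_nonneg (ha : 0 ≤ a) (hb : 0 ≤ b) :
    expKernelIntegralFormula c d a b
      = 1 / (c ^ 2 - d ^ 2) * (d / c * (1 - exp (2 * c * min a b)) + 1 - exp (c * a - d * a)
          - exp (c * b - d * b) + exp (c * (a + b) - d * |a - b|)) := by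
  rcases ha.eq_or_lt with rfl | ha
  · simp [expKernelIntegralFormula, abs_of_nonneg hb, min_eq_left hb]
  rw [expKernelIntegralFormula, if_pos (mul_nonneg ha.le hb), Real.sign_of_pos ha, abs_of_pos ha,
    abs_of_nonneg hb, mul_one, mul_one]

lemma expKernelIntegralFormula_of_nonneg_of_nonpos (ha : 0 ≤ a) (hb : b ≤ 0) :
    expKernelIntegralFormula c d a b
      = 1 / (c ^ 2 - d ^ 2) * ((1 - exp ((c - d) * a)) * (1 - exp ((c + d) * b))) := by
  have hindicator : (if 0 ≤ a * b then
      d * Real.sign a / c * (1 - exp (2 * c * Real.sign a * min |a| |b|)) else 0) = 0 := by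
    split_ifs with hab
    · rcases mul_eq_zero.1 (le_antisymm (mul_nonpos_of_nonneg_of_nonpos ha hb) hab) with rfl | rfl
        <;> simp
    · rfl
  rw [expKernelIntegralFormula, hindicator, abs_of_nonneg ha, abs_of_nonpos hb,
    abs_of_nonneg (by linarith : 0 ≤ a - b), show c * a - d * a = (c - d) * a by ring,
    show c * b - d * -b = (c + d) * b by ring,
    show c * (a + b) - d * (a - b) = (c - d) * a + (c + d) * b by ring, exp_add]
  ring

end Formula

lemma expKernelIntegral_eq_formula_of_nonneg {c d a b : ℝ} (hc : c ≠ 0) (hcd : c ^ 2 ≠ d ^ 2)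
    (ha : 0 ≤ a) : expKernelIntegral c d a b = expKernelIntegralFormula c d a b := by
  have h1 : c + d ≠ 0 := fun h => hcd (by rw [eq_neg_of_add_eq_zero_left h, neg_sq])
  have h2 : c - d ≠ 0 := fun h => hcd (by rw [sub_eq_zero.1 h])
  rcases le_total 0 b with hb | hb
  · rw [expKernelIntegral_of_nonneg ha hb hc h1 h2, expKernelIntegralFormula_of_nonneg ha hb]
  rw [expKernelIntegral_of_nonneg_of_nonpos ha hb h1 h2,
    expKernelIntegralFormula_of_nonneg_of_nonpos ha hb,
    show c ^ 2 - d ^ 2 = (c + d) * (c - d) by ring]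
  field_simp
  ring

theorem stmt_14 (a b c d : ℝ) (hc : c ≠ 0) (hcd : c ^ 2 ≠ d ^ 2) :
    (∫ τ' in (0 : ℝ)..a, ∫ τ in (0 : ℝ)..b, Real.exp (c * (τ + τ') - d * |τ - τ'|))
      = (1 / (c ^ 2 - d ^ 2)) *
        ((if 0 ≤ a * b then
            (d * Real.sign a / c) * (1 - Real.exp (2 * c * Real.sign a * min |a| |b|))
          else 0)
          + 1 - Real.exp (c * a - d * |a|) - Real.exp (c * b - d * |b|)
          + Real.exp (c * (a + b) - d * |a - b|)) := by
  change expKernelIntegral c d a b = expKernelIntegralFormula c d a b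
  rcases le_total 0 a with ha | ha
  · exact expKernelIntegral_eq_formula_of_nonneg hc hcd ha
  rw [expKernelIntegral_neg, expKernelIntegralFormula_neg]
  exact expKernelIntegral_eq_formula_of_nonneg (neg_ne_zero.2 hc) (by rwa [neg_sq])
    (neg_nonneg.2 ha)
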